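/- arXiv:1310.5083 — 6 statements merged into one kernel-verified Lean document; each statement's English description precedes it below -/
import Mathlib

section
/- The closure of the range of I − C acting on C([0,1]) equals the closed subspace Z = {f ∈ C([0,1]) : f(0) = 0}. -/
open MeasureTheory

noncomputable def ces (f : ℝ → ℂ) (x : ℝ) : ℂ :=
  if x = 0 then f 0 else (∫ t in (0:ℝ)..x, f t) / (x : ℂ)

lemma ces_polysum (c : ℕ → ℂ) (N : ℕ) (x : ℝ) :
    ces (fun t => ∑ n ∈ Finset.range N, c n * (t:ℂ)^(n+1)) x
      = ∑ n ∈ Finset.range N, c n * (x:ℂ)^(n+1) / (n+2) := by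
  unfold ces
  split
  · rename_i h; subst h; simp
  · rename_i hx
    have hint : ∀ n ∈ Finset.range N, IntervalIntegrable
        (fun t : ℝ => c n * (t:ℂ)^(n+1)) volume 0 x := fun n _ =>
      (Continuous.intervalIntegrable (by fun_prop) 0 x)
    rw [intervalIntegral.integral_finset_sum hint, Finset.sum_div]
    refine Finset.sum_congr rfl fun n _ => ?_
    have : (∫ t in (0:ℝ)..x, c n * (t:ℂ)^(n+1))
        = c n * ((x:ℂ)^(n+2) / (n+2)) := by
      rw [intervalIntegral.integral_const_mul]
      have : (∫ t in (0:ℝ)..x, ((t:ℂ))^(n+1))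
          = (((∫ t in (0:ℝ)..x, t^(n+1) : ℝ)) : ℂ) := by
        rw [← intervalIntegral.integral_ofReal]; push_cast; rfl
      rw [this, integral_pow]; push_cast; ring
    rw [this]
    have hxc : (x:ℂ) ≠ 0 := by exact_mod_cast hx
    have h2 : ((n:ℂ)+2) ≠ 0 := by
      exact_mod_cast (Nat.cast_add_one_ne_zero (n+1) : ((n+1:ℕ):ℂ)+1 ≠ 0)
    field_simp; ring

/-- A polynomial with zero constant term is exactly in the range of `I - C`. -/
lemma exists_range_poly (Q : Polynomial ℂ) (hQ0 : Q.coeff 0 = 0) :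
    ∃ f : ℝ → ℂ, ContinuousOn f (Set.Icc 0 1) ∧
      ∀ x : ℝ, f x - ces f x = Q.eval (x:ℂ) := by
  set N := Q.natDegree with hN
  set c : ℕ → ℂ := fun n => Q.coeff (n+1) * ((n:ℂ)+2) / ((n:ℂ)+1) with hc
  refine ⟨fun t => ∑ n ∈ Finset.range N, c n * (t:ℂ)^(n+1), ?_, ?_⟩
  · exact (Continuous.continuousOn (by fun_prop))
  · intro x
    rw [ces_polysum]
    rw [← Finset.sum_sub_distrib]
    rw [Polynomial.eval_eq_sum_range' (n := N + 1) (by omega) (x:ℂ)]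
    rw [Finset.sum_range_succ']
    simp only [hQ0, pow_zero, zero_mul, add_zero]
    refine Finset.sum_congr rfl fun n _ => ?_
    have h1 : ((n:ℂ)+1) ≠ 0 := by
      exact_mod_cast (Nat.cast_add_one_ne_zero n : ((n:ℕ):ℂ)+1 ≠ 0)
    have h2 : ((n:ℂ)+2) ≠ 0 := by
      exact_mod_cast (Nat.cast_add_one_ne_zero (n+1) : ((n+1:ℕ):ℂ)+1 ≠ 0)
    rw [hc]
    field_simp
    ring

/-- The closure of the range of `I - C` on `C([0,1])` is exactly
`Z = {f : f(0) = 0}`: a continuous `g` on `[0,1]` satisfies `g 0 = 0` iff it can be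
uniformly approximated by elements `f - C f` of the range. -/
theorem cesaro_range_closure (g : ℝ → ℂ) (hg : ContinuousOn g (Set.Icc 0 1)) :
    g 0 = 0 ↔
      ∀ ε > (0:ℝ), ∃ f : ℝ → ℂ, ContinuousOn f (Set.Icc 0 1) ∧
        ∀ x ∈ Set.Icc (0:ℝ) 1, ‖g x - (f x - ces f x)‖ < ε := by
  constructor
  · intro hg0 ε hε
    -- approximate re and im parts by real polynomials
    obtain ⟨p, hp⟩ := exists_polynomial_near_of_continuousOn 0 1 (fun x => (g x).re)
      (Complex.continuous_re.comp_continuousOn hg) (ε/4) (by linarith)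
    obtain ⟨q, hq⟩ := exists_polynomial_near_of_continuousOn 0 1 (fun x => (g x).im)
      (Complex.continuous_im.comp_continuousOn hg) (ε/4) (by linarith)
    set P : Polynomial ℂ := p.map (algebraMap ℝ ℂ)
      + Polynomial.C Complex.I * q.map (algebraMap ℝ ℂ) with hP
    have hmap : ∀ (r : Polynomial ℝ) (x : ℝ),
        (r.map (algebraMap ℝ ℂ)).eval (x:ℂ) = ((r.eval x : ℝ) : ℂ) := by
      intro r x
      rw [Polynomial.eval_map]
      have hx : ((x:ℝ):ℂ) = algebraMap ℝ ℂ x := rfl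
      rw [hx, Polynomial.eval₂_at_apply]
      rfl
    have hPeval : ∀ x : ℝ, P.eval (x:ℂ)
        = ((p.eval x : ℝ) : ℂ) + Complex.I * ((q.eval x : ℝ) : ℂ) := by
      intro x
      simp [hP, hmap]
    have hPnear : ∀ x ∈ Set.Icc (0:ℝ) 1, ‖P.eval (x:ℂ) - g x‖ < ε/2 := by
      intro x hx
      rw [hPeval]
      have hre : (((p.eval x : ℝ) : ℂ) + Complex.I * ((q.eval x : ℝ) : ℂ) - g x).re
          = p.eval x - (g x).re := by simp
      have him : (((p.eval x : ℝ) : ℂ) + Complex.I * ((q.eval x : ℝ) : ℂ) - g x).im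
          = q.eval x - (g x).im := by simp
      calc ‖((p.eval x : ℝ) : ℂ) + Complex.I * ((q.eval x : ℝ) : ℂ) - g x‖
          ≤ |(((p.eval x : ℝ) : ℂ) + Complex.I * ((q.eval x : ℝ) : ℂ) - g x).re|
            + |(((p.eval x : ℝ) : ℂ) + Complex.I * ((q.eval x : ℝ) : ℂ) - g x).im| :=
            Complex.norm_le_abs_re_add_abs_im _
        _ = |p.eval x - (g x).re| + |q.eval x - (g x).im| := by rw [hre, him]
        _ < ε/4 + ε/4 := add_lt_add (hp x hx) (hq x hx)
        _ = ε/2 := by ring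
    set Q : Polynomial ℂ := P - Polynomial.C (P.coeff 0) with hQ
    have hQ0 : Q.coeff 0 = 0 := by simp [hQ]
    have hP0 : ‖P.coeff 0‖ < ε/2 := by
      have h := hPnear 0 (by norm_num)
      rw [hg0, sub_zero] at h
      rw [Polynomial.coeff_zero_eq_eval_zero]
      simpa using h
    have hQnear : ∀ x ∈ Set.Icc (0:ℝ) 1, ‖Q.eval (x:ℂ) - g x‖ < ε := by
      intro x hx
      have : Q.eval (x:ℂ) - g x = (P.eval (x:ℂ) - g x) - P.coeff 0 := by
        simp [hQ]; ring
      rw [this]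
      calc ‖(P.eval (x:ℂ) - g x) - P.coeff 0‖
          ≤ ‖P.eval (x:ℂ) - g x‖ + ‖P.coeff 0‖ := norm_sub_le _ _
        _ < ε/2 + ε/2 := add_lt_add (hPnear x hx) hP0
        _ = ε := by ring
    obtain ⟨f, hfc, hf⟩ := exists_range_poly Q hQ0
    refine ⟨f, hfc, fun x hx => ?_⟩
    rw [hf x]
    simpa [norm_sub_rev] using hQnear x hx
  · intro h
    by_contra hne
    have hpos : 0 < ‖g 0‖ := by simpa [norm_pos_iff] using hne
    obtain ⟨f, -, hf⟩ := h ‖g 0‖ hpos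
    have := hf 0 (by norm_num)
    simp [ces] at this
end

section
/- If g ∈ C([0,1]) lies in the range of I − C, then g(0) = 0 and, for each x ∈ (0,1), the limit lim_{ε→0⁺} ∫_ε^x g(t)/t dt exists (is finite). -/
open MeasureTheory

/-!
On `(0, 1)` the Cesàro average `Cf` is differentiable with `(Cf)'(t) = (f t - Cf t) / t`, so
`g / t = (f - Cf) / t` is the derivative of `Cf` and `∫_ε^x g(t)/t dt = Cf(x) - Cf(ε)`.
Since `Cf(ε) → f(0)` as `ε → 0⁺` (the derivative of `∫₀ˣ f` at `0`), the limit exists.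
At `0` the equation `f - Cf = g` reads `f 0 - f 0 = g 0`.
-/

open Set Filter Topology intervalIntegral

variable {f : ℝ → ℂ} {b : ℝ}

theorem ces_zero (f : ℝ → ℂ) : ces f 0 = f 0 := if_pos rfl

theorem ces_of_ne_zero (f : ℝ → ℂ) {x : ℝ} (hx : x ≠ 0) :
    ces f x = (∫ t in (0:ℝ)..x, f t) / (x : ℂ) := if_neg hx

theorem ContinuousOn.intervalIntegrable_zero_of_mem_Icc (hf : ContinuousOn f (Icc 0 b))
    {x : ℝ} (hx : x ∈ Icc 0 b) : IntervalIntegrable f volume 0 x :=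
  (hf.mono (by rw [uIcc_of_le hx.1]; exact Icc_subset_Icc le_rfl hx.2)).intervalIntegrable

theorem hasDerivAt_ces (hf : ContinuousOn f (Icc 0 b)) {t : ℝ} (ht : t ∈ Ioo 0 b) :
    HasDerivAt (ces f) ((f t - ces f t) / t) t := by
  have ht0 : (t : ℂ) ≠ 0 := by exact_mod_cast ht.1.ne'
  have hF : HasDerivAt (fun u => ∫ s in (0:ℝ)..u, f s) (f t) t :=
    integral_hasDerivAt_right (hf.intervalIntegrable_zero_of_mem_Icc (Ioo_subset_Icc_self ht))
      ((hf.mono Ioo_subset_Icc_self).stronglyMeasurableAtFilter isOpen_Ioo t ht)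
      (hf.continuousAt (Icc_mem_nhds ht.1 ht.2))
  have hquot := hF.div (hasDerivAt_id t).ofReal_comp ht0
  have hces : ces f =ᶠ[𝓝 t] fun u => (∫ s in (0:ℝ)..u, f s) / (u : ℂ) := by
    filter_upwards [Ioi_mem_nhds ht.1] with u hu using ces_of_ne_zero f (ne_of_gt hu)
  refine (hquot.congr_of_eventuallyEq hces).congr_deriv ?_
  rw [ces_of_ne_zero f ht.1.ne']
  simp only [id, Complex.ofReal_one, mul_one]
  field_simp

theorem tendsto_ces_nhdsGT_zero (hb : 0 < b) (hf : ContinuousOn f (Icc 0 b)) :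
    Tendsto (ces f) (𝓝[>] 0) (𝓝 (f 0)) := by
  have hIcc : Icc 0 b ∈ 𝓝[>] (0 : ℝ) := Icc_mem_nhdsGT hb
  have hF : HasDerivWithinAt (fun u => ∫ s in (0:ℝ)..u, f s) (f 0) (Ici 0) 0 :=
    integral_hasDerivWithinAt_right (hf.intervalIntegrable_zero_of_mem_Icc ⟨le_rfl, hb.le⟩)
      ⟨Icc 0 b, hIcc, hf.aestronglyMeasurable measurableSet_Icc⟩
      ((hf 0 ⟨le_rfl, hb.le⟩).mono_of_mem_nhdsWithin hIcc)
  rw [hasDerivWithinAt_iff_tendsto_slope, Ici_sdiff_left] at hF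
  refine hF.congr' ?_
  filter_upwards [self_mem_nhdsWithin] with ε (hε : 0 < ε)
  rw [ces_of_ne_zero f hε.ne', slope_def_module, integral_same, sub_zero, sub_zero,
    Complex.real_smul, Complex.ofReal_inv, inv_mul_eq_div]

theorem integral_sub_ces_div_eq (hf : ContinuousOn f (Icc 0 b)) {ε x : ℝ} (hε : 0 < ε)
    (hεx : ε ≤ x) (hxb : x < b) :
    ∫ t in ε..x, (f t - ces f t) / t = ces f x - ces f ε := by
  have hIcc : uIcc ε x ⊆ Ioo 0 b := by
    rw [uIcc_of_le hεx]
    exact Icc_subset_Ioo hε hxb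
  have hderiv : ∀ t ∈ uIcc ε x, HasDerivAt (ces f) ((f t - ces f t) / t) t :=
    fun t ht => hasDerivAt_ces hf (hIcc ht)
  refine integral_eq_sub_of_hasDerivAt hderiv (ContinuousOn.intervalIntegrable ?_)
  intro t ht
  have htb : t ∈ Ioo 0 b := hIcc ht
  refine ContinuousAt.continuousWithinAt (ContinuousAt.div ?_ (by fun_prop) ?_)
  · exact (hf.continuousAt (Icc_mem_nhds htb.1 htb.2)).sub (hderiv t ht).continuousAt
  · exact_mod_cast htb.1.ne'

theorem cesaro_range_necessary_general (g : ℝ → ℂ)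
    (hrange : ∃ f : ℝ → ℂ, ContinuousOn f (Set.Icc 0 1) ∧
      ∀ x ∈ Set.Icc (0:ℝ) 1, f x - ces f x = g x) :
    g 0 = 0 ∧ ∀ x ∈ Set.Ioo (0:ℝ) 1, ∃ L : ℂ,
      Filter.Tendsto (fun ε : ℝ => ∫ t in ε..x, g t / (t : ℂ))
        (nhdsWithin 0 (Set.Ioi 0)) (nhds L) := by
  obtain ⟨f, hf, hfg⟩ := hrange
  refine ⟨by simpa [ces_zero] using (hfg 0 ⟨le_rfl, zero_le_one⟩).symm, fun x hx => ?_⟩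
  refine ⟨ces f x - f 0, (tendsto_const_nhds.sub (tendsto_ces_nhdsGT_zero one_pos hf)).congr' ?_⟩
  filter_upwards [Ioo_mem_nhdsGT hx.1] with ε hε
  rw [← integral_sub_ces_div_eq hf hε.1 hε.2.le hx.2]
  refine integral_congr fun t ht => ?_
  rw [uIcc_of_le hε.2.le] at ht
  rw [← hfg t ⟨hε.1.le.trans ht.1, ht.2.trans hx.2.le⟩]

theorem cesaro_range_necessary (g : ℝ → ℂ) (hg : ContinuousOn g (Set.Icc 0 1))
    (hrange : ∃ f : ℝ → ℂ, ContinuousOn f (Set.Icc 0 1) ∧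
      ∀ x ∈ Set.Icc (0:ℝ) 1, f x - ces f x = g x) :
    g 0 = 0 ∧ ∀ x ∈ Set.Ioo (0:ℝ) 1, ∃ L : ℂ,
      Filter.Tendsto (fun ε : ℝ => ∫ t in ε..x, g t / (t : ℂ))
        (nhdsWithin 0 (Set.Ioi 0)) (nhds L) :=
  cesaro_range_necessary_general g hrange
end

section
/- The Cesàro operator C on C([0,1]) is not supercyclic: there is no g ∈ C([0,1]) such that {λ Cⁿ g : λ ∈ ℂ, n ≥ 0} is dense in C([0,1]). -/
open MeasureTheory

lemma ces_iterate_zero (g : ℝ → ℂ) (n : ℕ) : (ces^[n] g) 0 = g 0 := by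
  induction n with
  | zero => rfl
  | succ n ih => rw [Function.iterate_succ_apply', ces]; simpa using ih

lemma ces_bound (f : ℝ → ℂ) (B : ℝ) (hf : ∀ x ∈ Set.Icc (0:ℝ) 1, ‖f x‖ ≤ B) :
    ∀ x ∈ Set.Icc (0:ℝ) 1, ‖ces f x‖ ≤ B := by
  intro x hx
  rcases eq_or_ne x 0 with rfl | hx0
  · simpa [ces] using hf 0 (by simp)
  · have hxpos : 0 < x := lt_of_le_of_ne hx.1 (Ne.symm hx0)
    have hI : ‖∫ t in (0:ℝ)..x, f t‖ ≤ B * |x - 0| := by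
      apply intervalIntegral.norm_integral_le_of_norm_le_const
      intro t ht
      rw [Set.uIoc_of_le hxpos.le] at ht
      exact hf t ⟨ht.1.le, ht.2.trans hx.2⟩
    rw [ces, if_neg hx0]
    rw [norm_div]
    have : ‖(x:ℂ)‖ = x := by
      rw [Complex.norm_real, Real.norm_eq_abs, abs_of_pos hxpos]
    rw [this, div_le_iff₀ hxpos]
    calc ‖∫ t in (0:ℝ)..x, f t‖ ≤ B * |x - 0| := hI
      _ = B * x := by rw [sub_zero, abs_of_pos hxpos]

lemma ces_iterate_bound (g : ℝ → ℂ) (B : ℝ) (hg : ∀ x ∈ Set.Icc (0:ℝ) 1, ‖g x‖ ≤ B)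
    (n : ℕ) : ∀ x ∈ Set.Icc (0:ℝ) 1, ‖(ces^[n] g) x‖ ≤ B := by
  induction n with
  | zero => simpa using hg
  | succ n ih =>
    intro x hx
    rw [Function.iterate_succ_apply']
    exact ces_bound _ B ih x hx

/-- The Cesàro operator on `C([0,1])` is not supercyclic: no continuous `g` has
projective orbit `{λ Cⁿ g}` dense in `C([0,1])` (sup-norm). -/
theorem cesaro_not_supercyclic :
    ¬ ∃ g : ℝ → ℂ, ContinuousOn g (Set.Icc 0 1) ∧
      ∀ h : ℝ → ℂ, ContinuousOn h (Set.Icc 0 1) → ∀ ε > (0:ℝ),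
        ∃ (c : ℂ) (n : ℕ), ∀ x ∈ Set.Icc (0:ℝ) 1, ‖h x - c • (ces^[n] g) x‖ < ε := by
  rintro ⟨g, hg, hdense⟩
  -- bound for g
  obtain ⟨B, hB⟩ := (isCompact_Icc).exists_bound_of_continuousOn hg
  have hBnn : (0:ℝ) ≤ B := le_trans (norm_nonneg _) (hB 0 (by simp))
  by_cases hg0 : g 0 = 0
  · -- approximate the constant 1
    obtain ⟨c, n, hcn⟩ := hdense (fun _ => 1) continuousOn_const (1/2) (by norm_num)
    have := hcn 0 (by simp)
    rw [ces_iterate_zero, hg0] at this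
    simp at this
    linarith
  · -- approximate h x = x
    have hg0' : 0 < ‖g 0‖ := norm_pos_iff.mpr hg0
    set ε : ℝ := ‖g 0‖ / (2 * (‖g 0‖ + B)) with hε
    have hεpos : 0 < ε := div_pos hg0' (by positivity)
    obtain ⟨c, n, hcn⟩ := hdense (fun x => (x : ℂ))
      (Complex.continuous_ofReal.continuousOn) ε hεpos
    have h0 := hcn 0 (by simp)
    have h1 := hcn 1 (by simp)
    rw [ces_iterate_zero] at h0
    simp only [Complex.ofReal_zero, zero_sub, norm_neg, norm_smul] at h0
    -- ‖c‖ * ‖g 0‖ < ε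
    have hc : ‖c‖ < ε / ‖g 0‖ := by
      rw [lt_div_iff₀ hg0']; exact h0
    have hv : ‖(ces^[n] g) 1‖ ≤ B := ces_iterate_bound g B hB n 1 (by simp)
    have htri : (1:ℝ) ≤ ‖(1:ℂ) - c • (ces^[n] g) 1‖ + ‖c‖ * ‖(ces^[n] g) 1‖ := by
      calc (1:ℝ) = ‖(1:ℂ)‖ := by simp
        _ = ‖((1:ℂ) - c • (ces^[n] g) 1) + c • (ces^[n] g) 1‖ := by ring_nf
        _ ≤ ‖(1:ℂ) - c • (ces^[n] g) 1‖ + ‖c • (ces^[n] g) 1‖ := norm_add_le _ _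
        _ = ‖(1:ℂ) - c • (ces^[n] g) 1‖ + ‖c‖ * ‖(ces^[n] g) 1‖ := by rw [norm_smul]
    simp only [Complex.ofReal_one] at h1
    have hcB : ‖c‖ * ‖(ces^[n] g) 1‖ ≤ (ε / ‖g 0‖) * B :=
      mul_le_mul hc.le hv (norm_nonneg _) (by positivity)
    have : (1:ℝ) < ε + (ε / ‖g 0‖) * B := by linarith
    have key : ∀ a : ℝ, 0 < a → a / (2*(a+B)) + (a / (2*(a+B)) / a) * B = 1/2 := by
      intro a ha
      have h2 : a + B ≠ 0 := by positivity
      field_simp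
    have hεval : ε + (ε / ‖g 0‖) * B = 1/2 := key ‖g 0‖ hg0'
    rw [hεval] at this
    linarith
end

section
/- If f ∈ C_l([0,∞]) satisfies Cf = λf for some λ ≠ 0, then λ = 1 and f is constant; that is, the point spectrum of the Cesàro operator on C_l([0,∞]) restricted to nonzero eigenvalues is exactly {1} with eigenspace the constants. -/
open MeasureTheory

/-!
Put `F x = ∫₀ˣ f`. The eigenvalue equation reads `F x = l x F'(x)` on `(0, ∞)`, an Euler equation,
so `F = F 1 · x ^ (1/l)` and `f = c · x ^ (1/l - 1)` there. If `l ≠ 1`, evaluating at `0` gives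
`f 0 = 0`, and a power function with exponent `α` that tends to `0` at `0⁺` and converges at `∞`
vanishes: for `Re α ≤ 0` its modulus is at least `‖c‖` near `0`, for `Re α > 0` it blows up at `∞`.
So `f = 0`. If `l = 1`, `f` is constant on `(0, ∞)`, hence on `[0, ∞)` by continuity.
-/

open Set Filter Topology

theorem hasDerivAt_integral_of_continuousOn_Ici {E : Type*} [NormedAddCommGroup E]
    [NormedSpace ℝ E] [CompleteSpace E] {f : ℝ → E} {a x : ℝ} (hf : ContinuousOn f (Ici a))
    (hx : a < x) : HasDerivAt (fun u => ∫ t in a..u, f t) (f x) x := by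
  have hcont : ∀ y ∈ Ioi a, ContinuousAt f y := fun y hy =>
    hf.continuousAt (mem_of_superset (Ioi_mem_nhds hy) Ioi_subset_Ici_self)
  refine intervalIntegral.integral_hasDerivAt_right ?_
    (ContinuousAt.stronglyMeasurableAtFilter isOpen_Ioi hcont x hx) (hcont x hx)
  exact (hf.mono (by rw [uIcc_of_le hx.le]; exact Icc_subset_Ici_self)).intervalIntegrable

theorem hasDerivAt_ofReal_cpow_of_pos {x : ℝ} (hx : 0 < x) (a : ℂ) :
    HasDerivAt (fun y : ℝ => (y : ℂ) ^ a) (a * (x : ℂ) ^ (a - 1)) x := by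
  simpa using ((hasDerivAt_id (x : ℂ)).cpow_const (c := a)
    (Complex.ofReal_mem_slitPlane.2 hx)).comp_ofReal

theorem eq_mul_cpow_of_hasDerivAt {F : ℝ → ℂ} {a : ℂ}
    (hF : ∀ x ∈ Ioi (0 : ℝ), HasDerivAt F (a * F x / x) x) :
    ∀ x ∈ Ioi (0 : ℝ), F x = F 1 * (x : ℂ) ^ a := by
  have hg : ∀ x ∈ Ioi (0 : ℝ), HasDerivAt (fun y : ℝ => F y * (y : ℂ) ^ (-a)) 0 x := by
    intro x hx
    have hx0 : (x : ℂ) ≠ 0 := Complex.ofReal_ne_zero.2 (ne_of_gt hx)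
    refine ((hF x hx).mul (hasDerivAt_ofReal_cpow_of_pos hx (-a))).congr_deriv ?_
    rw [Complex.cpow_sub _ _ hx0, Complex.cpow_one]
    field_simp
    ring
  have hconst : ∀ x ∈ Ioi (0 : ℝ), F x * (x : ℂ) ^ (-a) = F 1 := fun x hx => by
    simpa using isOpen_Ioi.is_const_of_deriv_eq_zero isPreconnected_Ioi
      (fun y hy => (hg y hy).differentiableAt.differentiableWithinAt)
      (fun y hy => (hg y hy).deriv) hx (mem_Ioi.2 one_pos)
  intro x hx
  have hxa : (x : ℂ) ^ a ≠ 0 := by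
    simp [Complex.cpow_eq_zero_iff, (mem_Ioi.1 hx).ne']
  rw [← hconst x hx, Complex.cpow_neg, mul_assoc, inv_mul_cancel₀ hxa, mul_one]

theorem eqOn_const_mul_cpow_of_ces_eq {f : ℝ → ℂ} {l : ℂ} (hf : ContinuousOn f (Ici 0))
    (hl : l ≠ 0) (heig : ∀ x ∈ Ioi (0 : ℝ), ces f x = l * f x) :
    ∃ c : ℂ, EqOn f (fun x : ℝ => c * (x : ℂ) ^ (1 / l - 1)) (Ioi 0) := by
  set F : ℝ → ℂ := fun x => ∫ t in (0:ℝ)..x, f t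
  have hF : ∀ x ∈ Ioi (0 : ℝ), f x = F x / (l * x) := by
    intro x hx
    have hx0 : (x : ℂ) ≠ 0 := Complex.ofReal_ne_zero.2 (ne_of_gt hx)
    have h := heig x hx
    rw [ces, if_neg (ne_of_gt hx), div_eq_iff hx0] at h
    rw [eq_div_iff (mul_ne_zero hl hx0)]
    change _ = ∫ t in (0:ℝ)..x, f t
    rw [h]
    ring
  have hpow := eq_mul_cpow_of_hasDerivAt (F := F) (a := 1 / l) fun x hx => by
    refine (hasDerivAt_integral_of_continuousOn_Ici hf hx).congr_deriv ?_
    rw [hF x hx]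
    ring
  refine ⟨F 1 / l, fun x hx => ?_⟩
  have hx0 : (x : ℂ) ≠ 0 := Complex.ofReal_ne_zero.2 (ne_of_gt hx)
  show f x = F 1 / l * (x : ℂ) ^ (1 / l - 1)
  rw [hF x hx, hpow x hx, Complex.cpow_sub _ _ hx0, Complex.cpow_one]
  field_simp

theorem eq_zero_of_tendsto_const_mul_cpow {c α L : ℂ}
    (h0 : Tendsto (fun x : ℝ => c * (x : ℂ) ^ α) (𝓝[>] 0) (𝓝 0))
    (hinf : Tendsto (fun x : ℝ => c * (x : ℂ) ^ α) atTop (𝓝 L)) : c = 0 := by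
  have hnorm : ∀ x ∈ Ioi (0 : ℝ), ‖c * (x : ℂ) ^ α‖ = ‖c‖ * x ^ α.re := fun x hx => by
    rw [norm_mul, Complex.norm_cpow_eq_rpow_re_of_pos hx]
  rcases le_or_gt α.re 0 with hre | hre
  · have hle : ∀ᶠ x : ℝ in 𝓝[>] 0, ‖c‖ ≤ ‖c * (x : ℂ) ^ α‖ := by
      filter_upwards [Ioo_mem_nhdsGT (zero_lt_one' ℝ)] with x hx
      rw [hnorm x hx.1]
      exact le_mul_of_one_le_right (norm_nonneg c)
        (Real.one_le_rpow_of_pos_of_le_one_of_nonpos hx.1 hx.2.le hre)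
    have hnorm0 : Tendsto (fun x : ℝ => ‖c * (x : ℂ) ^ α‖) (𝓝[>] 0) (𝓝 0) := by
      simpa using h0.norm
    exact norm_le_zero_iff.1 (ge_of_tendsto hnorm0 hle)
  · by_contra hc
    have hbig : Tendsto (fun x : ℝ => ‖c * (x : ℂ) ^ α‖) atTop atTop := by
      refine ((tendsto_rpow_atTop hre).const_mul_atTop (norm_pos_iff.2 hc)).congr' ?_
      filter_upwards [Ioi_mem_atTop 0] with x hx
      exact (hnorm x hx).symm
    exact not_tendsto_atTop_of_tendsto_nhds hinf.norm hbig

/-- In `C_l([0,∞])` (continuous functions on `[0,∞)` with a limit at infinity), the only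
nonzero eigenvalue of the Cesàro operator is `1`, with eigenspace the constants. -/
theorem cesaro_Cl_point_spectrum (f : ℝ → ℂ) (hf : ContinuousOn f (Set.Ici 0))
    (hlim : ∃ L : ℂ, Filter.Tendsto f Filter.atTop (nhds L))
    (hne : ∃ x ∈ Set.Ici (0:ℝ), f x ≠ 0)
    (l : ℂ) (hl : l ≠ 0)
    (heig : ∀ x ∈ Set.Ici (0:ℝ), ces f x = l * f x) :
    l = 1 ∧ ∃ c : ℂ, ∀ x ∈ Set.Ici (0:ℝ), f x = c := by
  obtain ⟨L, hL⟩ := hlim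
  obtain ⟨c, hpow⟩ :=
    eqOn_const_mul_cpow_of_ces_eq hf hl fun x hx => heig x (Ioi_subset_Ici_self hx)
  have hf0 : f 0 = l * f 0 := by simpa [ces] using heig 0 self_mem_Ici
  have hcont0 : Tendsto f (𝓝[>] 0) (𝓝 (f 0)) :=
    ((hf 0 self_mem_Ici).mono Ioi_subset_Ici_self).tendsto
  by_cases hl1 : l = 1
  · subst hl1
    have hconst : EqOn f (fun _ => c) (Ioi 0) := fun x hx => by simpa using hpow hx
    refine ⟨rfl, c, fun x hx => ?_⟩
    rcases (mem_Ici.1 hx).eq_or_lt with rfl | hx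
    · exact tendsto_nhds_unique hcont0
        (tendsto_const_nhds.congr' (eventuallyEq_nhdsWithin_of_eqOn hconst).symm)
    · exact hconst hx
  · have hzero : f 0 = 0 := by
      rcases mul_eq_zero.1 (show (1 - l) * f 0 = 0 by linear_combination hf0) with h | h
      · exact absurd (sub_eq_zero.1 h).symm hl1
      · exact h
    have hc : c = 0 := eq_zero_of_tendsto_const_mul_cpow
      ((hzero ▸ hcont0).congr' (eventuallyEq_nhdsWithin_of_eqOn hpow))
      (hL.congr' (eventuallyEq_of_mem (Ioi_mem_atTop 0) hpow))
    obtain ⟨x, hx, hfx⟩ := hne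
    rcases (mem_Ici.1 hx).eq_or_lt with rfl | hx
    · exact absurd hzero hfx
    · simp [hpow hx, hc] at hfx
end

section
/- For Re(ξ) < 1 the operator P_ξ f(x) = ∫₀¹ s^{−ξ} f(xs) ds is bounded on C_l([0,∞]) with operator norm exactly 1/(1 − Re ξ); moreover for f ∈ C_l([0,∞]), lim_{x→∞} P_ξ f(x) = f(∞)/(1 − ξ), so P_ξ maps C_l([0,∞]) into itself. -/
/-!
Since `‖s ^ (-ξ)‖ = s ^ (-Re ξ)` and `∫₀¹ s ^ (-Re ξ) ds = 1 / (1 - Re ξ)`, the operator norm is at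
most `1 / (1 - Re ξ)`; the same integrable majorant gives continuity of `P_ξ f` and its limit at
infinity by dominated convergence, since `f (x s) → f(∞)` for every `s > 0`. For the lower bound,
the test function `f_a(t) = (clamp t to [a, 1]) ^ (i Im ξ)` has modulus one and cancels the phase of
`s ^ (-ξ)` on `[a, 1]`, so `P_ξ f_a (1)` is `∫ₐ¹ s ^ (-Re ξ) ds` up to an error `O(a ^ (1 - Re ξ))`.
-/

open MeasureTheory

/-- The operator `P_ξ f (x) = ∫₀¹ s^(-ξ) f(xs) ds`. -/
noncomputable def pOp (ξ : ℂ) (f : ℝ → ℂ) (x : ℝ) : ℂ :=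
  ∫ s in (0:ℝ)..1, (s : ℂ) ^ (-ξ) * f (x * s)

open Filter Set Topology Interval intervalIntegral

section KernelIntegral

variable {ξ : ℂ}

theorem norm_ofReal_cpow_mul_le {s M : ℝ} (hs : 0 < s) {z : ℂ} (hz : ‖z‖ ≤ M) :
    ‖(s : ℂ) ^ (-ξ) * z‖ ≤ M * s ^ (-ξ.re) := by
  rw [norm_mul, Complex.norm_cpow_eq_rpow_re_of_pos hs, Complex.neg_re, mul_comm]
  exact mul_le_mul_of_nonneg_right hz (Real.rpow_nonneg hs.le _)

theorem norm_integral_ofReal_cpow_mul_le (hξ : ξ.re < 1) {g : ℝ → ℂ} {M a : ℝ} (ha : 0 ≤ a)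
    (hg : ∀ s ∈ Ioc 0 a, ‖g s‖ ≤ M) :
    ‖∫ s in (0:ℝ)..a, (s : ℂ) ^ (-ξ) * g s‖ ≤ M * a ^ (1 - ξ.re) / (1 - ξ.re) := by
  have hexp : (-1 : ℝ) < -ξ.re := by linarith
  calc ‖∫ s in (0:ℝ)..a, (s : ℂ) ^ (-ξ) * g s‖
      ≤ ∫ s in (0:ℝ)..a, M * s ^ (-ξ.re) :=
        norm_integral_le_of_norm_le ha
          (Eventually.of_forall fun s hs => norm_ofReal_cpow_mul_le hs.1 (hg s hs))
          ((intervalIntegrable_rpow' hexp).const_mul M)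
    _ = M * a ^ (1 - ξ.re) / (1 - ξ.re) := by
        rw [intervalIntegral.integral_const_mul, integral_rpow (Or.inl hexp),
          Real.zero_rpow (by linarith), show -ξ.re + 1 = 1 - ξ.re by ring]
        ring

theorem integral_ofReal_cpow_neg (hξ : ξ.re < 1) :
    ∫ s in (0:ℝ)..1, (s : ℂ) ^ (-ξ) = 1 / (1 - ξ) := by
  have hne : -ξ + 1 ≠ 0 := fun h => by
    have := congrArg Complex.re h
    simp only [Complex.add_re, Complex.neg_re, Complex.one_re, Complex.zero_re] at this
    linarith
  rw [integral_cpow (Or.inl (by simpa using hξ)), Complex.ofReal_zero, Complex.zero_cpow hne,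
    Complex.ofReal_one, Complex.one_cpow, sub_zero, add_comm, ← sub_eq_add_neg]

end KernelIntegral

theorem bddAbove_norm_of_continuousOn_Ici_of_tendsto {f : ℝ → ℂ} (hf : ContinuousOn f (Ici 0))
    {L : ℂ} (hL : Tendsto f atTop (𝓝 L)) : BddAbove (range fun y : Ici (0:ℝ) => ‖f y‖) := by
  obtain ⟨R, hR⟩ := eventually_atTop.1 (hL.norm.eventually_lt_const (lt_add_one ‖L‖))
  obtain ⟨C, hC⟩ := (isCompact_Icc (a := (0:ℝ)) (b := max R 0)).exists_bound_of_continuousOn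
    (hf.mono Icc_subset_Ici_self)
  refine ⟨max C (‖L‖ + 1), ?_⟩
  rintro _ ⟨⟨t, ht⟩, rfl⟩
  rcases le_or_gt t (max R 0) with htR | htR
  · exact le_max_of_le_left (hC t ⟨ht, htR⟩)
  · exact le_max_of_le_right (hR t (le_max_left R 0 |>.trans htR.le)).le

section Operator

variable {ξ : ℂ} {f : ℝ → ℂ} {M : ℝ}

theorem norm_pOp_le (hξ : ξ.re < 1) (hf : ∀ t, 0 ≤ t → ‖f t‖ ≤ M) {x : ℝ} (hx : 0 ≤ x) :
    ‖pOp ξ f x‖ ≤ (1 - ξ.re)⁻¹ * M := by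
  have h := norm_integral_ofReal_cpow_mul_le hξ (g := fun s => f (x * s)) zero_le_one
    fun s hs => hf _ (mul_nonneg hx hs.1.le)
  rwa [Real.one_rpow, mul_one, div_eq_inv_mul] at h

theorem bddAbove_norm_pOp (hξ : ξ.re < 1) (hf : ∀ t, 0 ≤ t → ‖f t‖ ≤ M) :
    BddAbove (range fun y : Ici (0:ℝ) => ‖pOp ξ f y‖) :=
  ⟨_, by rintro _ ⟨y, rfl⟩; exact norm_pOp_le hξ hf y.2⟩

theorem aestronglyMeasurable_pOp_integrand (hf : ContinuousOn f (Ici 0)) {x : ℝ} (hx : 0 ≤ x) :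
    AEStronglyMeasurable (fun s : ℝ => (s : ℂ) ^ (-ξ) * f (x * s)) (volume.restrict (Ι 0 1)) := by
  rw [uIoc_of_le zero_le_one]
  refine ContinuousOn.aestronglyMeasurable (fun s hs => ?_) measurableSet_Ioc
  have hcpow : ContinuousAt (fun t : ℝ => (t : ℂ) ^ (-ξ)) s :=
    (continuousAt_cpow_const (Complex.ofReal_mem_slitPlane.2 hs.1)).comp
      Complex.continuous_ofReal.continuousAt
  exact hcpow.continuousWithinAt.mul <| (hf _ (mul_nonneg hx hs.1.le)).comp
    (continuous_const_mul x).continuousWithinAt fun t ht => mul_nonneg hx ht.1.le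

theorem ae_norm_pOp_integrand_le (hf : ∀ t, 0 ≤ t → ‖f t‖ ≤ M) {x : ℝ} (hx : 0 ≤ x) :
    ∀ᵐ s, s ∈ Ι (0:ℝ) 1 → ‖(s : ℂ) ^ (-ξ) * f (x * s)‖ ≤ M * s ^ (-ξ.re) :=
  Eventually.of_forall fun s hs => by
    rw [uIoc_of_le zero_le_one] at hs
    exact norm_ofReal_cpow_mul_le hs.1 (hf _ (mul_nonneg hx hs.1.le))

theorem continuousOn_pOp (hξ : ξ.re < 1) (hf : ContinuousOn f (Ici 0))
    (hM : ∀ t, 0 ≤ t → ‖f t‖ ≤ M) : ContinuousOn (pOp ξ f) (Ici 0) := fun x₀ hx₀ =>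
  continuousWithinAt_of_dominated_interval (bound := fun s => M * s ^ (-ξ.re))
    (eventually_mem_nhdsWithin.mono fun _ hx => aestronglyMeasurable_pOp_integrand hf hx)
    (eventually_mem_nhdsWithin.mono fun _ hx => ae_norm_pOp_integrand_le hM hx)
    ((intervalIntegrable_rpow' (by linarith)).const_mul M)
    (Eventually.of_forall fun s hs => by
      rw [uIoc_of_le zero_le_one] at hs
      exact continuousWithinAt_const.mul <|
        (hf (x₀ * s) (mul_nonneg hx₀ hs.1.le)).comp (f := fun x => x * s)
          (continuous_mul_const s).continuousWithinAt fun _ hx => mul_nonneg hx hs.1.le)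

theorem tendsto_pOp_atTop (hξ : ξ.re < 1) (hf : ContinuousOn f (Ici 0))
    (hM : ∀ t, 0 ≤ t → ‖f t‖ ≤ M) {L : ℂ} (hL : Tendsto f atTop (𝓝 L)) :
    Tendsto (pOp ξ f) atTop (𝓝 (L / (1 - ξ))) := by
  have hlim : Tendsto (pOp ξ f) atTop (𝓝 (∫ s in (0:ℝ)..1, (s : ℂ) ^ (-ξ) * L)) :=
    tendsto_integral_filter_of_dominated_convergence (bound := fun s => M * s ^ (-ξ.re))
      ((eventually_ge_atTop 0).mono fun _ hx => aestronglyMeasurable_pOp_integrand hf hx)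
      ((eventually_ge_atTop 0).mono fun _ hx => ae_norm_pOp_integrand_le hM hx)
      ((intervalIntegrable_rpow' (by linarith)).const_mul M)
      (Eventually.of_forall fun s hs => by
        rw [uIoc_of_le zero_le_one] at hs
        exact (hL.comp <| tendsto_id.atTop_mul_const hs.1).const_mul _)
  rwa [intervalIntegral.integral_mul_const, integral_ofReal_cpow_neg hξ, one_div,
    inv_mul_eq_div] at hlim

end Operator

section PhaseTest

variable {ξ : ℂ} {a : ℝ}

noncomputable def phaseTest (ξ : ℂ) (a t : ℝ) : ℂ :=
  ((max a (min t 1) : ℝ) : ℂ) ^ ((ξ.im : ℂ) * Complex.I)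

theorem continuous_phaseTest (ha : 0 < a) : Continuous (phaseTest ξ a) :=
  (Complex.continuous_ofReal.comp (continuous_const.max (continuous_id.min continuous_const))).cpow
    continuous_const fun _ => Complex.ofReal_mem_slitPlane.2 (ha.trans_le (le_max_left _ _))

theorem norm_phaseTest (ha : 0 < a) (t : ℝ) : ‖phaseTest ξ a t‖ = 1 := by
  rw [phaseTest, Complex.norm_cpow_eq_rpow_re_of_pos (ha.trans_le (le_max_left _ _))]
  simp

theorem tendsto_phaseTest (ha : a ≤ 1) : Tendsto (phaseTest ξ a) atTop (𝓝 1) :=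
  tendsto_const_nhds.congr' <| (eventually_ge_atTop 1).mono fun t ht => by
    rw [phaseTest, min_eq_right ht, max_eq_right ha, Complex.ofReal_one, Complex.one_cpow]

theorem ofReal_cpow_mul_phaseTest {s : ℝ} (ha : 0 < a) (has : a ≤ s) (hs : s ≤ 1) :
    (s : ℂ) ^ (-ξ) * phaseTest ξ a s = ((s ^ (-ξ.re) : ℝ) : ℂ) := by
  have hs0 : 0 < s := ha.trans_le has
  rw [phaseTest, min_eq_left hs, max_eq_right has,
    ← Complex.cpow_add _ _ (Complex.ofReal_ne_zero.2 hs0.ne'), Complex.ofReal_cpow hs0.le]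
  congr 1
  apply Complex.ext <;> simp

theorem integral_ofReal_cpow_mul_phaseTest (hξ : ξ.re < 1) (ha : 0 < a) (ha1 : a ≤ 1) :
    ∫ s in a..1, (s : ℂ) ^ (-ξ) * phaseTest ξ a s =
      (((1 - a ^ (1 - ξ.re)) / (1 - ξ.re) : ℝ) : ℂ) := by
  have hEq : EqOn (fun s : ℝ => (s : ℂ) ^ (-ξ) * phaseTest ξ a s)
      (fun s : ℝ => ((s ^ (-ξ.re) : ℝ) : ℂ)) (uIcc a 1) := fun s hs => by
    rw [uIcc_of_le ha1] at hs
    exact ofReal_cpow_mul_phaseTest ha hs.1 hs.2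
  rw [integral_congr hEq, integral_ofReal, integral_rpow (Or.inl (by linarith)),
    show -ξ.re + 1 = 1 - ξ.re by ring, Real.one_rpow]

theorem le_norm_pOp_phaseTest (hξ : ξ.re < 1) (ha : 0 < a) (ha1 : a ≤ 1) :
    (1 - 2 * a ^ (1 - ξ.re)) / (1 - ξ.re) ≤ ‖pOp ξ (phaseTest ξ a) 1‖ := by
  have hσ : 0 < 1 - ξ.re := by linarith
  have hint (b c : ℝ) :
      IntervalIntegrable (fun s => (s : ℂ) ^ (-ξ) * phaseTest ξ a s) volume b c :=
    (intervalIntegrable_cpow' (by rw [Complex.neg_re]; linarith)).mul_continuousOn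
      (continuous_phaseTest ha).continuousOn
  have hhead := norm_integral_ofReal_cpow_mul_le hξ (g := phaseTest ξ a) ha.le
    fun s _ => (norm_phaseTest ha s).le
  have htail : ‖∫ s in a..1, (s : ℂ) ^ (-ξ) * phaseTest ξ a s‖ =
      (1 - a ^ (1 - ξ.re)) / (1 - ξ.re) := by
    rw [integral_ofReal_cpow_mul_phaseTest hξ ha ha1, Complex.norm_real, Real.norm_eq_abs,
      abs_of_nonneg (div_nonneg (by linarith [Real.rpow_le_one ha.le ha1 hσ.le]) hσ.le)]
  have hsum := norm_le_add_norm_add' (∫ s in (0:ℝ)..a, (s : ℂ) ^ (-ξ) * phaseTest ξ a s)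
    (∫ s in a..1, (s : ℂ) ^ (-ξ) * phaseTest ξ a s)
  rw [integral_add_adjacent_intervals (hint 0 a) (hint a 1), htail] at hsum
  calc (1 - 2 * a ^ (1 - ξ.re)) / (1 - ξ.re)
      = (1 - a ^ (1 - ξ.re)) / (1 - ξ.re) - 1 * a ^ (1 - ξ.re) / (1 - ξ.re) := by ring
    _ ≤ ‖∫ s in (0:ℝ)..1, (s : ℂ) ^ (-ξ) * phaseTest ξ a s‖ := by linarith
    _ = ‖pOp ξ (phaseTest ξ a) 1‖ := by simp only [pOp, one_mul]

end PhaseTest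

/-- For `Re ξ < 1`, `P_ξ` maps `C_l([0,∞])` into itself, with
`lim_{x→∞} P_ξ f (x) = f(∞)/(1-ξ)`, it is bounded with `‖P_ξ f‖_∞ ≤ ‖f‖_∞/(1 - Re ξ)`,
and its operator norm (the least upper bound of `‖P_ξ f‖_∞` over the unit ball) is exactly `1/(1 - Re ξ)`. -/
theorem pOp_norm (ξ : ℂ) (hξ : ξ.re < 1) :
    (∀ f : ℝ → ℂ, ContinuousOn f (Set.Ici 0) →
      ∀ L : ℂ, Filter.Tendsto f Filter.atTop (nhds L) →
        ContinuousOn (pOp ξ f) (Set.Ici 0) ∧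
        Filter.Tendsto (pOp ξ f) Filter.atTop (nhds (L / (1 - ξ))) ∧
        ∀ x ∈ Set.Ici (0:ℝ), ‖pOp ξ f x‖ ≤ (1 - ξ.re)⁻¹ * ⨆ y : Set.Ici (0:ℝ), ‖f y‖) ∧
    IsLUB {r : ℝ | ∃ f : ℝ → ℂ, ContinuousOn f (Set.Ici 0) ∧
      (∃ L : ℂ, Filter.Tendsto f Filter.atTop (nhds L)) ∧
      (∀ y ∈ Set.Ici (0:ℝ), ‖f y‖ ≤ 1) ∧
      r = ⨆ y : Set.Ici (0:ℝ), ‖pOp ξ f y‖} ((1 - ξ.re)⁻¹) := by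
  refine ⟨fun f hf L hL => ?_, ?_, fun b hb => ?_⟩
  · have hM : ∀ t, 0 ≤ t → ‖f t‖ ≤ ⨆ y : Ici (0:ℝ), ‖f y‖ := fun t ht =>
      le_ciSup (bddAbove_norm_of_continuousOn_Ici_of_tendsto hf hL) ⟨t, ht⟩
    exact ⟨continuousOn_pOp hξ hf hM, tendsto_pOp_atTop hξ hf hM hL,
      fun x hx => norm_pOp_le hξ hM hx⟩
  · rintro _ ⟨f, -, -, hf, rfl⟩
    exact ciSup_le fun y => (norm_pOp_le hξ hf y.2).trans_eq (mul_one _)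
  · have hlower : ∀ a ∈ Ioo (0:ℝ) 1, (1 - 2 * a ^ (1 - ξ.re)) / (1 - ξ.re) ≤ b := fun a ha =>
      have hf : ∀ t, 0 ≤ t → ‖phaseTest ξ a t‖ ≤ 1 := fun t _ => (norm_phaseTest ha.1 t).le
      (le_norm_pOp_phaseTest hξ ha.1 ha.2.le).trans <|
        (le_ciSup (bddAbove_norm_pOp hξ hf) ⟨1, mem_Ici.2 zero_le_one⟩).trans <|
          hb ⟨_, (continuous_phaseTest ha.1).continuousOn, ⟨1, tendsto_phaseTest ha.2.le⟩, hf, rfl⟩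
    have hcont : ContinuousAt (fun a : ℝ => (1 - 2 * a ^ (1 - ξ.re)) / (1 - ξ.re)) 0 := by
      have hrpow := Real.continuousAt_rpow_const 0 (1 - ξ.re) (Or.inr (by linarith))
      exact ((hrpow.const_mul 2).const_sub 1).div_const _
    refine le_of_tendsto ?_ (eventually_of_mem (Ioo_mem_nhdsGT zero_lt_one) hlower)
    convert hcont.tendsto.mono_left nhdsWithin_le_nhds using 2
    rw [Real.zero_rpow (by linarith)]
    ring
end

section
/- Let 1 < p < ∞ and let λ ∈ ℂ satisfy |λ − q/2| < q/2, where 1/p + 1/q = 1 (equivalently Re(1/λ) > 1/q). Then the function f_λ(x) = x^{1/λ − 1} belongs to L^p_{loc}([0,∞)) (its p-th power is integrable over each interval [0,j]) and satisfies C f_λ = λ f_λ, where Cf(x) = (1/x)∫₀ˣ f(t)dt. -/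
/-!
Writing `f_λ(x) = x^c` with `c = 1/λ - 1`, the disc `|λ - q/2| < q/2` is exactly the region
`|λ|² < q Re λ`, i.e. `Re(1/λ) > 1/q`, i.e. `p Re c > -1`. Then `|x^c|^p = x^(p Re c)` is integrable
near `0`, and `∫₀ˣ t^c dt = x^(c+1)/(c+1) = λ x · x^c`.
-/

open MeasureTheory

namespace Complex

theorem normSq_lt_mul_re_of_norm_sub_half_lt {r : ℝ} {z : ℂ} (h : ‖z - (r / 2 : ℝ)‖ < r / 2) :
    normSq z < r * z.re := by
  have hsq : normSq (z - (r / 2 : ℝ)) < (r / 2) ^ 2 := by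
    rw [← Complex.sq_norm]
    exact pow_lt_pow_left₀ h (norm_nonneg _) two_ne_zero
  simp only [normSq_apply, sub_re, sub_im, ofReal_re, ofReal_im, sub_zero] at hsq ⊢
  nlinarith

theorem inv_lt_inv_re_of_norm_sub_half_lt {r : ℝ} (hr : 0 < r) {z : ℂ}
    (h : ‖z - (r / 2 : ℝ)‖ < r / 2) : r⁻¹ < z⁻¹.re := by
  have hz := normSq_lt_mul_re_of_norm_sub_half_lt h
  have hz_pos : 0 < normSq z := normSq_pos.mpr fun h0 => by simp [h0] at hz
  rw [inv_re, lt_div_iff₀ hz_pos]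
  nlinarith [inv_mul_cancel₀ hr.ne']

end Complex

theorem memLp_ofReal_cpow_restrict_Ioc {p : ℝ} (hp : 0 < p) {c : ℂ} (hc : -1 < c.re * p)
    (b : ℝ) :
    MemLp (fun x : ℝ => (x : ℂ) ^ c) (ENNReal.ofReal p) (volume.restrict (Set.Ioc 0 b)) := by
  have hmeas : AEStronglyMeasurable (fun x : ℝ => (x : ℂ) ^ c) (volume.restrict (Set.Ioc 0 b)) :=
    (Complex.measurable_ofReal.pow_const c).aestronglyMeasurable
  rw [← integrable_norm_rpow_iff hmeas (by simp [hp]) ENNReal.ofReal_ne_top,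
    ENNReal.toReal_ofReal hp.le]
  refine (intervalIntegral.intervalIntegrable_rpow' hc (a := 0) (b := b)).1.congr ?_
  filter_upwards [ae_restrict_mem measurableSet_Ioc] with x hx
  rw [Complex.norm_cpow_eq_rpow_re_of_pos hx.1, ← Real.rpow_mul hx.1.le]

theorem ces_ofReal_cpow {c : ℂ} (hc : -1 < c.re) {x : ℝ} (hx : 0 < x) :
    ces (fun t : ℝ => (t : ℂ) ^ c) x = (x : ℂ) ^ c / (c + 1) := by
  have hc1 : c + 1 ≠ 0 := fun h => by
    have := congrArg Complex.re h
    simp only [Complex.add_re, Complex.one_re, Complex.zero_re] at this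
    linarith
  have hx' : (x : ℂ) ≠ 0 := Complex.ofReal_ne_zero.mpr hx.ne'
  rw [ces, if_neg hx.ne', integral_cpow (Or.inl hc), Complex.ofReal_zero,
    Complex.zero_cpow hc1, sub_zero, Complex.cpow_add _ _ hx', Complex.cpow_one]
  field_simp

/-- For `1 < p < ∞` and `|λ - q/2| < q/2` (with `1/p + 1/q = 1`), the function
`f_λ(x) = x^(1/λ - 1)` lies in `L^p_loc([0,∞))` (its `p`-th power is integrable on each
`[0,j]`) and is an eigenfunction: `C f_λ = λ f_λ`. -/
theorem cesaro_Lploc_eigenfunction (p q : ℝ) (hp : 1 < p) (hq : 1/p + 1/q = 1)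
    (l : ℂ) (hl : ‖l - (q/2 : ℝ)‖ < q/2) :
    (∀ j : ℕ, MemLp (fun x : ℝ => (x : ℂ) ^ (1/l - 1)) (ENNReal.ofReal p)
      (volume.restrict (Set.Ioc (0:ℝ) (j : ℝ)))) ∧
    ∀ x ∈ Set.Ioi (0:ℝ),
      ces (fun t : ℝ => (t : ℂ) ^ (1/l - 1)) x = l * (x : ℂ) ^ (1/l - 1) := by
  have hp0 : 0 < p := one_pos.trans hp
  have hq0 : 0 < q := by
    have : 1 / p < 1 := (div_lt_one hp0).mpr hp
    exact one_div_pos.mp (by linarith)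
  have hre : q⁻¹ < l⁻¹.re := Complex.inv_lt_inv_re_of_norm_sub_half_lt hq0 hl
  have hc : -1 < (1 / l - 1).re * p := by
    have hpq : p * q⁻¹ = p - 1 := by field_simp at hq ⊢; linarith
    rw [one_div, Complex.sub_re, Complex.one_re]
    nlinarith
  refine ⟨fun j => memLp_ofReal_cpow_restrict_Ioc hp0 hc j, fun x hx => ?_⟩
  rw [ces_ofReal_cpow (by nlinarith) hx, sub_add_cancel, one_div, div_inv_eq_mul, mul_comm]
end
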